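/- Fix y ∈ ℝⁿ, a real symmetric positive definite n×n matrix R, and σ_ε² ≥ 0, and for σ² > 0 let K̄(σ²) be the matrix K̄ associated with K(σ²) = σ²R + σ_ε²Iₙ. Under Hypothesis H2, for every i = 1,…,n the standardized Leave-One-Out residual (K̄(σ²)y)ᵢ/√(K̄(σ²)ᵢᵢ) tends to 0 as σ² → +∞. -/

import Mathlib

open Matrix

/-- The matrix `K̄ = K⁻¹ − K⁻¹F(FᵀK⁻¹F)⁻¹FᵀK⁻¹`. -/
noncomputable def Kbar {n p : ℕ} (F : Matrix (Fin n) (Fin p) ℝ)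
    (K : Matrix (Fin n) (Fin n) ℝ) : Matrix (Fin n) (Fin n) ℝ :=
  K⁻¹ - K⁻¹ * F * (Fᵀ * K⁻¹ * F)⁻¹ * Fᵀ * K⁻¹

/-!
`K̄` is homogeneous of degree `-1` in `K`, and `σ²R + σ_ε²I = σ² (R + (σ_ε²/σ²) I)`, so the
standardized residual at `σ²` equals `(σ²)^{-1/2}` times the standardized residual of
`K̄(R + tI)` at `t = σ_ε²/σ² → 0`. The latter converges to the standardized residual of `K̄(R)`
by continuity, which is legitimate because `K̄(R)ᵢᵢ > 0`: writing `K̄ = Mᵀ K⁻¹ M` with `M = I − P`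
for the `K⁻¹`-orthogonal projection `P` onto `Im F`, we get `K̄ᵢᵢ = ‖M eᵢ‖²_{K⁻¹}`, and `M eᵢ ≠ 0`
exactly because `eᵢ ∉ Im F`.
-/

open Filter Topology

namespace Matrix

variable {m n K : Type*}

theorem mulVec_injective_of_rank_eq_card [Fintype n] [Field K] {F : Matrix m n K}
    (hF : F.rank = Fintype.card n) : Function.Injective F.mulVec := by
  rw [mulVec_injective_iff, linearIndependent_iff_card_eq_finrank_span, ← hF,
    rank_eq_finrank_span_cols]
  rfl

variable [Fintype m] [DecidableEq m]

theorem inv_smul_of_ne_zero [Field K] {c : K} (hc : c ≠ 0) (A : Matrix m m K) :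
    (c • A)⁻¹ = c⁻¹ • A⁻¹ := by
  by_cases hA : IsUnit A.det
  · exact inv_smul' A (Units.mk0 c hc) hA
  · have hcA : ¬IsUnit (c • A).det := by
      rwa [det_smul, IsUnit.mul_iff, not_and_or, or_iff_right (by simp [hc])]
    rw [nonsing_inv_apply_not_isUnit _ hA, nonsing_inv_apply_not_isUnit _ hcA, smul_zero]

theorem continuousAt_inv_of_det_ne_zero [NormedField K] {A : Matrix m m K} (hA : A.det ≠ 0) :
    ContinuousAt Inv.inv A :=
  continuousAt_matrix_inv A (by simpa only [Ring.inverse_eq_inv'] using continuousAt_inv₀ hA)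

theorem PosDef.transpose_mul_inv_mul [Fintype n] {A : Matrix m m ℝ} (hA : A.PosDef)
    {F : Matrix m n ℝ} (hF : Function.Injective F.mulVec) : (Fᵀ * A⁻¹ * F).PosDef := by
  simpa only [conjTranspose_eq_transpose_of_trivial] using hA.inv.conjTranspose_mul_mul_same hF

theorem PosDef.transpose_mul_mul_diag_pos {A : Matrix m m ℝ} (hA : A.PosDef) (M : Matrix m m ℝ)
    {i : m} (hM : M *ᵥ Pi.single i 1 ≠ 0) : 0 < (Mᵀ * A * M) i i := by
  have hdiag : (M *ᵥ Pi.single i 1) ⬝ᵥ A *ᵥ (M *ᵥ Pi.single i 1) = (Mᵀ * A * M) i i :=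
    calc (M *ᵥ Pi.single i 1) ⬝ᵥ A *ᵥ (M *ᵥ Pi.single i 1)
        = (Pi.single i 1 ᵥ* Mᵀ) ⬝ᵥ (A * M) *ᵥ Pi.single i 1 := by
          rw [vecMul_transpose, mulVec_mulVec]
      _ = Pi.single i 1 ⬝ᵥ (Mᵀ * A * M) *ᵥ Pi.single i 1 := by
          rw [← dotProduct_mulVec, mulVec_mulVec, Matrix.mul_assoc]
      _ = (Mᵀ * A * M) i i := by simp [single_dotProduct, mulVec_single]
  simpa only [← hdiag, star_trivial] using hA.dotProduct_mulVec_pos hM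

end Matrix

section Kbar

variable {n p : ℕ}

theorem Kbar_smul (F : Matrix (Fin n) (Fin p) ℝ) (K : Matrix (Fin n) (Fin n) ℝ) {c : ℝ}
    (hc : c ≠ 0) : Kbar F (c • K) = c⁻¹ • Kbar F K := by
  simp only [Kbar, inv_smul_of_ne_zero hc, Matrix.mul_smul, Matrix.smul_mul,
    inv_smul_of_ne_zero (inv_ne_zero hc), inv_inv, smul_smul, smul_sub]
  congr 2
  field_simp

theorem continuousAt_Kbar (F : Matrix (Fin n) (Fin p) ℝ) {K : Matrix (Fin n) (Fin n) ℝ}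
    (hK : K.det ≠ 0) (hFKF : (Fᵀ * K⁻¹ * F).det ≠ 0) : ContinuousAt (Kbar F) K := by
  have hpoly : Continuous fun AB : Matrix (Fin n) (Fin n) ℝ × Matrix (Fin p) (Fin p) ℝ =>
      AB.1 - AB.1 * F * AB.2 * Fᵀ * AB.1 := by fun_prop
  have hcongr : Continuous fun A : Matrix (Fin n) (Fin n) ℝ => Fᵀ * A * F := by fun_prop
  have hinv : ContinuousAt Inv.inv K := continuousAt_inv_of_det_ne_zero hK
  have hinvFKF : ContinuousAt (fun K : Matrix (Fin n) (Fin n) ℝ => (Fᵀ * K⁻¹ * F)⁻¹) K :=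
    (continuousAt_inv_of_det_ne_zero hFKF).comp (f := fun K => Fᵀ * K⁻¹ * F)
      (hcongr.continuousAt.comp hinv)
  exact hpoly.continuousAt.comp (hinv.prodMk hinvFKF)

/-- `I − P`, where `P = F(FᵀK⁻¹F)⁻¹FᵀK⁻¹` is the `K⁻¹`-orthogonal projection onto `Im F`. -/
noncomputable def residualMaker (F : Matrix (Fin n) (Fin p) ℝ) (K : Matrix (Fin n) (Fin n) ℝ) :
    Matrix (Fin n) (Fin n) ℝ :=
  1 - F * (Fᵀ * K⁻¹ * F)⁻¹ * Fᵀ * K⁻¹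

theorem Kbar_eq_transpose_residualMaker_mul {F : Matrix (Fin n) (Fin p) ℝ}
    {K : Matrix (Fin n) (Fin n) ℝ} (hK : K.IsSymm) (hFKF : IsUnit (Fᵀ * K⁻¹ * F).det) :
    Kbar F K = (residualMaker F K)ᵀ * K⁻¹ * residualMaker F K := by
  have hA : (K⁻¹)ᵀ = K⁻¹ := hK.inv.eq
  have hB : ((Fᵀ * K⁻¹ * F)⁻¹)ᵀ = (Fᵀ * K⁻¹ * F)⁻¹ := by
    rw [transpose_nonsing_inv, transpose_mul, transpose_mul, hA, transpose_transpose,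
      Matrix.mul_assoc]
  have hcancel := nonsing_inv_mul _ hFKF
  rw [Kbar, residualMaker]
  generalize (Fᵀ * K⁻¹ * F)⁻¹ = B at hB hcancel ⊢
  generalize K⁻¹ = A at hA hcancel ⊢
  have hBFAFB (X : Matrix (Fin p) (Fin n) ℝ) : B * (Fᵀ * (A * (F * (B * X)))) = B * X := by
    simp only [← Matrix.mul_assoc, hcancel, Matrix.one_mul]
  simp only [transpose_sub, transpose_one, transpose_mul, hA, hB, transpose_transpose,
    Matrix.sub_mul, Matrix.mul_sub, Matrix.one_mul, Matrix.mul_one, Matrix.mul_assoc, hBFAFB]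
  abel

theorem residualMaker_mulVec_ne_zero (F : Matrix (Fin n) (Fin p) ℝ) (K : Matrix (Fin n) (Fin n) ℝ)
    {v : Fin n → ℝ} (hv : v ∉ LinearMap.range F.mulVecLin) : residualMaker F K *ᵥ v ≠ 0 := by
  intro h
  refine hv ⟨((Fᵀ * K⁻¹ * F)⁻¹ * Fᵀ * K⁻¹) *ᵥ v, ?_⟩
  rw [residualMaker, sub_mulVec, one_mulVec, sub_eq_zero] at h
  simpa only [mulVecLin_apply, mulVec_mulVec, Matrix.mul_assoc] using h.symm

theorem Kbar_diag_pos {F : Matrix (Fin n) (Fin p) ℝ} (hF : Function.Injective F.mulVec)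
    {K : Matrix (Fin n) (Fin n) ℝ} (hK : K.PosDef) {i : Fin n}
    (hi : Pi.single i 1 ∉ LinearMap.range F.mulVecLin) : 0 < Kbar F K i i := by
  rw [Kbar_eq_transpose_residualMaker_mul (isHermitian_iff_isSymm.mp hK.isHermitian)
    (isUnit_iff_ne_zero.mpr (hK.transpose_mul_inv_mul hF).det_pos.ne')]
  exact hK.inv.transpose_mul_mul_diag_pos _ (residualMaker_mulVec_ne_zero F K hi)

end Kbar

section standardizedResidual

variable {ι : Type*} [Fintype ι]

noncomputable def standardizedResidual (M : Matrix ι ι ℝ) (y : ι → ℝ) (i : ι) : ℝ :=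
  (M *ᵥ y) i / √(M i i)

theorem standardizedResidual_smul (M : Matrix ι ι ℝ) (y : ι → ℝ) (i : ι) {c : ℝ} (hc : 0 ≤ c) :
    standardizedResidual (c • M) y i = √c * standardizedResidual M y i := by
  obtain rfl | hc := hc.eq_or_lt
  · simp [standardizedResidual]
  have hsqrt : √c ≠ 0 := (Real.sqrt_pos.mpr hc).ne'
  calc standardizedResidual (c • M) y i = (√c * √c * (M *ᵥ y) i) / (√c * √(M i i)) := by
        rw [standardizedResidual, Real.mul_self_sqrt hc.le, ← Real.sqrt_mul hc.le, smul_mulVec]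
        rfl
    _ = √c * standardizedResidual M y i := by
        rw [mul_assoc, mul_div_mul_left _ _ hsqrt, standardizedResidual, mul_div_assoc]

theorem continuousAt_standardizedResidual {M : Matrix ι ι ℝ} (y : ι → ℝ) {i : ι}
    (hM : 0 < M i i) : ContinuousAt (fun M => standardizedResidual M y i) M := by
  have hnum : Continuous fun M : Matrix ι ι ℝ => (M *ᵥ y) i := by fun_prop
  have hden : Continuous fun M : Matrix ι ι ℝ => √(M i i) := by fun_prop
  exact hnum.continuousAt.div hden.continuousAt (Real.sqrt_pos.mpr hM).ne'

end standardizedResidual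

theorem stmt7_general (n p : ℕ)
    (F : Matrix (Fin n) (Fin p) ℝ) (hF : F.rank = p)
    (hH2 : ∀ i : Fin n, Pi.single i (1 : ℝ) ∉ LinearMap.range (Matrix.mulVecLin F))
    (y : Fin n → ℝ) (R : Matrix (Fin n) (Fin n) ℝ) (hR : R.PosDef)
    (sigeps2 : ℝ) :
    ∀ i : Fin n,
      Filter.Tendsto
        (fun s : ℝ =>
          (Kbar F (s • R + sigeps2 • 1) *ᵥ y) i /
            Real.sqrt (Kbar F (s • R + sigeps2 • 1) i i))
        Filter.atTop (nhds 0) := by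
  intro i
  have hFinj := mulVec_injective_of_rank_eq_card (hF.trans (Fintype.card_fin p).symm)
  have hcont : Tendsto (fun t : ℝ => Kbar F (R + t • 1)) (𝓝 0) (𝓝 (Kbar F R)) :=
    (continuousAt_Kbar F hR.det_pos.ne' (hR.transpose_mul_inv_mul hFinj).det_pos.ne').tendsto.comp
      ((by fun_prop : Continuous fun t : ℝ => R + t • (1 : Matrix (Fin n) (Fin n) ℝ)).tendsto'
        0 R (by simp))
  have hres : Tendsto (fun s : ℝ => standardizedResidual (Kbar F (R + (sigeps2 / s) • 1)) y i)
      atTop (𝓝 (standardizedResidual (Kbar F R) y i)) :=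
    (continuousAt_standardizedResidual y (Kbar_diag_pos hFinj hR (hH2 i))).tendsto.comp
      (hcont.comp (tendsto_const_nhds.div_atTop tendsto_id))
  have hsqrt : Tendsto (fun s : ℝ => √(s⁻¹)) atTop (𝓝 0) :=
    Real.sqrt_zero ▸ (Real.continuous_sqrt.tendsto 0).comp tendsto_inv_atTop_zero
  refine (zero_mul (standardizedResidual (Kbar F R) y i) ▸ hsqrt.mul hres).congr' ?_
  filter_upwards [eventually_gt_atTop 0] with s hs
  have hscale : s • R + sigeps2 • (1 : Matrix (Fin n) (Fin n) ℝ) = s • (R + (sigeps2 / s) • 1) := by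
    rw [smul_add, smul_smul, mul_div_cancel₀ _ hs.ne']
  rw [hscale, Kbar_smul F _ hs.ne', ← standardizedResidual_smul _ _ _ (inv_nonneg.mpr hs.le)]
  rfl

/-- Under Hypothesis H2, each standardized Leave-One-Out residual
`(K̄(σ²)y)ᵢ/√(K̄(σ²)ᵢᵢ)` for `K(σ²) = σ²R + σ_ε²Iₙ` tends to `0` as `σ² → +∞`. -/
theorem stmt7 (n p : ℕ) (hp : 0 < p) (hpn : p < n)
    (F : Matrix (Fin n) (Fin p) ℝ) (hF : F.rank = p)
    (hH2 : ∀ i : Fin n, Pi.single i (1 : ℝ) ∉ LinearMap.range (Matrix.mulVecLin F))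
    (y : Fin n → ℝ) (R : Matrix (Fin n) (Fin n) ℝ) (hR : R.PosDef)
    (sigeps2 : ℝ) (hsig : 0 ≤ sigeps2) :
    ∀ i : Fin n,
      Filter.Tendsto
        (fun s : ℝ =>
          (Kbar F (s • R + sigeps2 • 1) *ᵥ y) i /
            Real.sqrt (Kbar F (s • R + sigeps2 • 1) i i))
        Filter.atTop (nhds 0) :=
  stmt7_general n p F hF hH2 y R hR sigeps2
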